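/- For every non-negative integer n and nonzero complex a, the sum ∑_{j=0}^{2n} (-a/2)^(-j) · E(j, (a+1)/2) / (j! · (2n-j)!) equals E(2n) / ((2n)! · a^(2n)), where E(m,x) is the Euler polynomial and E(m) the Euler number. -/

import Mathlib

/-!
The Euler polynomials form an Appell sequence, `E_j(x + y) = ∑ₖ C(j,k) E_k(x) y^(j-k)`, inherited
from the Bernoulli polynomials. Swapping the order of summation and applying the binomial theorem,
`∑ⱼ C(N,j) z^j E_j(x + y) = ∑ₖ C(N,k) z^k E_k(x) (z y + 1)^(N-k)`, which collapses to `z^N E_N(x)`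
when `z y = -1`. Multiplying the sum by `(2n)!` and taking `N = 2n`, `x = 1/2`, `y = a/2`,
`z = -2/a` gives the identity, the sign disappearing because `N` is even.
-/

/-- The `n`-th Euler polynomial (as a function `ℂ → ℂ`), defined via Bernoulli
polynomials by `E_n(x) = 2^{n+1}/(n+1) * (B_{n+1}((x+1)/2) - B_{n+1}(x/2))`,
which is equivalent to the generating function `2 e^{xt}/(e^t+1) = ∑ E_n(x) t^n/n!`. -/
noncomputable def eulerPoly (n : ℕ) (x : ℂ) : ℂ :=
  (2 : ℂ) ^ (n + 1) / (n + 1) *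
    (Polynomial.aeval ((x + 1) / 2) (Polynomial.bernoulli (n + 1)) -
     Polynomial.aeval (x / 2) (Polynomial.bernoulli (n + 1)))

/-- The `n`-th Euler number, `E_n = 2^n E_n(1/2)`. -/
noncomputable def eulerNumber (n : ℕ) : ℂ := 2 ^ n * eulerPoly n (1 / 2)

open Finset

theorem sum_range_choose_mul_sum_range_choose {R : Type*} [CommSemiring R] (N : ℕ)
    (f : ℕ → ℕ → R) :
    ∑ j ∈ range (N + 1), ∑ k ∈ range (j + 1), (N.choose j * j.choose k : R) * f k (j - k) =
      ∑ k ∈ range (N + 1), ∑ m ∈ range (N - k + 1),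
        (N.choose k * (N - k).choose m : R) * f k m := by
  simp only [range_eq_Ico]
  rw [← sum_Ico_Ico_comm]
  refine sum_congr rfl fun k hk => ?_
  have hkN : k ≤ N := by grind
  rw [sum_Ico_eq_sum_range, show N + 1 - k = N - k + 1 by omega, ← range_eq_Ico]
  refine sum_congr rfl fun m _ => ?_
  rw [Nat.add_sub_cancel_left, ← Nat.cast_mul, Nat.choose_mul (by omega), Nat.add_sub_cancel_left,
    Nat.cast_mul]

theorem sum_choose_mul_pow_mul_sum_choose {R : Type*} [CommRing R] (e : ℕ → R) (N : ℕ) (y z : R) :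
    ∑ j ∈ range (N + 1), N.choose j * z ^ j * ∑ k ∈ range (j + 1), j.choose k * e k * y ^ (j - k) =
      ∑ k ∈ range (N + 1), N.choose k * z ^ k * e k * (z * y + 1) ^ (N - k) := by
  calc _ = ∑ j ∈ range (N + 1), ∑ k ∈ range (j + 1),
        (N.choose j * j.choose k : R) * (z ^ k * e k * (z * y) ^ (j - k)) := by
        refine sum_congr rfl fun j _ => ?_
        rw [mul_sum]
        refine sum_congr rfl fun k hk => ?_
        obtain ⟨m, rfl⟩ : ∃ m, j = k + m := ⟨j - k, by grind⟩
        rw [Nat.add_sub_cancel_left]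
        ring
    _ = _ := by
        refine (sum_range_choose_mul_sum_range_choose N fun k m => z ^ k * e k * (z * y) ^ m).trans ?_
        refine sum_congr rfl fun k _ => ?_
        rw [add_pow, mul_sum]
        refine sum_congr rfl fun m _ => ?_
        ring

theorem Polynomial.aeval_bernoulli {A : Type*} [CommRing A] [Algebra ℚ A] (n : ℕ) (x : A) :
    aeval x (bernoulli n) =
      ∑ i ∈ range (n + 1), n.choose i * algebraMap ℚ A (_root_.bernoulli i) * x ^ (n - i) := by
  rw [bernoulli, map_sum]
  refine sum_congr rfl fun i _ => ?_
  rw [aeval_monomial, map_mul, map_natCast, mul_comm (algebraMap ℚ A _)]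

theorem Polynomial.aeval_bernoulli_add {A : Type*} [CommRing A] [Algebra ℚ A] (n : ℕ) (x y : A) :
    aeval (x + y) (bernoulli n) =
      ∑ k ∈ range (n + 1), n.choose k * aeval x (bernoulli k) * y ^ (n - k) := by
  set b : ℕ → A := fun i => algebraMap ℚ A (_root_.bernoulli i)
  calc aeval (x + y) (bernoulli n)
      = ∑ i ∈ range (n + 1), ∑ m ∈ range (n - i + 1),
          (n.choose i * (n - i).choose m : A) * (b i * x ^ m * y ^ (n - i - m)) := by
        rw [aeval_bernoulli]
        refine sum_congr rfl fun i _ => ?_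
        rw [add_pow, mul_sum]
        refine sum_congr rfl fun m _ => ?_
        ring
    _ = ∑ j ∈ range (n + 1), ∑ k ∈ range (j + 1),
          (n.choose j * j.choose k : A) * (b k * x ^ (j - k) * y ^ (n - k - (j - k))) :=
        (sum_range_choose_mul_sum_range_choose n _).symm
    _ = _ := by
        refine sum_congr rfl fun j hj => ?_
        rw [aeval_bernoulli, mul_sum, sum_mul]
        refine sum_congr rfl fun k hk => ?_
        rw [show n - k - (j - k) = n - j by grind]
        ring

theorem eulerPoly_add (j : ℕ) (x y : ℂ) :
    eulerPoly j (x + y) = ∑ k ∈ range (j + 1), j.choose k * eulerPoly k x * y ^ (j - k) := by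
  rw [eulerPoly, show (x + y + 1) / 2 = (x + 1) / 2 + y / 2 by ring, add_div x y 2,
    Polynomial.aeval_bernoulli_add, Polynomial.aeval_bernoulli_add, ← sum_sub_distrib,
    sum_range_succ', mul_add, mul_sum]
  rw [Polynomial.bernoulli_zero, map_one, map_one, sub_self, mul_zero, add_zero]
  refine sum_congr rfl fun k hk => ?_
  have hkj : k ≤ j := by grind
  have hchoose : ((j + 1 : ℂ)) * j.choose k = (j + 1).choose (k + 1) * (k + 1) := by
    exact_mod_cast Nat.add_one_mul_choose_eq j k
  have hpow : (2 : ℂ) ^ (j + 1) = 2 ^ (k + 1) * 2 ^ (j - k) := by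
    rw [← pow_add]; congr 1; omega
  rw [eulerPoly, Nat.succ_sub_succ, div_pow, hpow]
  field_simp
  linear_combination (-y ^ (j - k) *
    (Polynomial.aeval ((x + 1) / 2) (Polynomial.bernoulli (k + 1)) -
      Polynomial.aeval (x / 2) (Polynomial.bernoulli (k + 1)))) * hchoose

theorem sum_choose_mul_pow_mul_eulerPoly_add (N : ℕ) (x y z : ℂ) (hzy : z * y = -1) :
    ∑ j ∈ range (N + 1), N.choose j * z ^ j * eulerPoly j (x + y) = z ^ N * eulerPoly N x := by
  simp only [eulerPoly_add]
  rw [sum_choose_mul_pow_mul_sum_choose, hzy, neg_add_cancel, sum_range_succ, sum_eq_zero]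
  · simp
  · intro k hk
    rw [zero_pow (by grind), mul_zero]

/-- Known Euler polynomial sum identity (NIST 24.4.13):
`∑_{j=0}^{2n} (-a/2)^{-j} E(j,(a+1)/2) / (j! (2n-j)!) = E(2n) / ((2n)! a^{2n})`. -/
theorem euler_poly_sum' (n : ℕ) (a : ℂ) (ha : a ≠ 0) :
    ∑ j ∈ Finset.range (2 * n + 1),
      (-a / 2) ^ (-(j : ℤ)) * eulerPoly j ((a + 1) / 2) /
        ((Nat.factorial j : ℂ) * (Nat.factorial (2 * n - j) : ℂ)) =
    eulerNumber (2 * n) / ((Nat.factorial (2 * n) : ℂ) * a ^ (2 * n)) := by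
  have hzy : -2 / a * (a / 2) = -1 := by field_simp
  have hfact : (Nat.factorial (2 * n) : ℂ) ≠ 0 := mod_cast Nat.factorial_ne_zero _
  have hterm : ∀ j ∈ range (2 * n + 1),
      (-a / 2) ^ (-(j : ℤ)) * eulerPoly j ((a + 1) / 2) /
        ((Nat.factorial j : ℂ) * (Nat.factorial (2 * n - j) : ℂ)) =
      (2 * n).choose j * (-2 / a) ^ j * eulerPoly j (1 / 2 + a / 2) / (Nat.factorial (2 * n)) := by
    intro j hj
    rw [Nat.cast_choose ℂ (by grind : j ≤ 2 * n), zpow_neg, zpow_natCast,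
      show 1 / 2 + a / 2 = (a + 1) / 2 by ring, show -2 / a = (-a / 2)⁻¹ by field_simp, inv_pow]
    field_simp
  rw [sum_congr rfl hterm, ← sum_div, sum_choose_mul_pow_mul_eulerPoly_add _ _ _ _ hzy,
    eulerNumber, neg_div, Even.neg_pow (even_two_mul n), div_pow]
  field_simp
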